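/- arXiv:2101.08710 — 4 statements merged into one kernel-verified Lean document; each statement's English description precedes it below -/
import Mathlib

section
/- Let S = K[x_1,...,x_n] with a fixed monomial order, and let J, E be ideals of S. If in(J+E) = in(J) + in(E), then in(J ∩ E) = in(J) ∩ in(E). -/
open MvPolynomial

variable {K : Type*} [Field K] {n : ℕ}

/-- The leading monomial (exponent vector) of a polynomial with respect to a monomial
order `m`: the maximum of the support; by convention `lm m 0 = 0`. -/
noncomputable def lm (m : MonomialOrder (Fin n)) (f : MvPolynomial (Fin n) K) :
    Fin n →₀ ℕ :=
  m.toSyn.symm (f.support.sup fun d => m.toSyn d)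

/-- The initial ideal of `I`: the ideal generated by the leading monomials of the
nonzero elements of `I`. -/
noncomputable def initialIdeal (m : MonomialOrder (Fin n))
    (I : Ideal (MvPolynomial (Fin n) K)) : Ideal (MvPolynomial (Fin n) K) :=
  Ideal.span {p | ∃ f ∈ I, f ≠ 0 ∧ p = monomial (lm m f) (1 : K)}

/-- `G` is a Gröbner basis of `I`: a finite set of nonzero polynomials generating `I`
whose leading monomials generate the initial ideal of `I`. -/
def IsGroebnerBasis (m : MonomialOrder (Fin n)) (I : Ideal (MvPolynomial (Fin n) K))
    (G : Set (MvPolynomial (Fin n) K)) : Prop :=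
  G.Finite ∧ (0 : MvPolynomial (Fin n) K) ∉ G ∧ Ideal.span G = I ∧
    Ideal.span ((fun g => monomial (lm m g) (1 : K)) '' G) = initialIdeal m I

/-- The S-polynomial `S(f,g)` with respect to the monomial order `m`. -/
noncomputable def sPoly (m : MonomialOrder (Fin n)) (f g : MvPolynomial (Fin n) K) :
    MvPolynomial (Fin n) K :=
  monomial (lm m f ⊔ lm m g - lm m f) (f.coeff (lm m f))⁻¹ * f -
    monomial (lm m f ⊔ lm m g - lm m g) (g.coeff (lm m g))⁻¹ * g

/-- An ideal is a monomial ideal if it is generated by monomials. -/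
def IsMonomialIdeal (I : Ideal (MvPolynomial (Fin n) K)) : Prop :=
  ∃ M : Set (Fin n →₀ ℕ), I = Ideal.span ((fun μ => (monomial μ (1 : K))) '' M)

/-!
Cancelling leading terms shows, by well-founded induction on the degree, that when
`in(J + E) = in(J) + in(E)` every `h ∈ J + E` has a standard representation `h = a + b` with
`a ∈ J`, `b ∈ E` and `deg a, deg b ≤ deg h`. Now let `x^d ∈ in(J) ∩ in(E)`: then `J` and `E`
contain monic `f` and `g` of degree `d`. Either `f = g ∈ J ∩ E`, or `deg (f - g) < d`, and a
standard representation `f - g = a + b` gives the element `f - a = g + b` of `J ∩ E`, which is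
still monic of degree `d`.
-/

open scoped MonomialOrder

namespace MonomialOrder

variable {σ : Type*} (m : MonomialOrder σ)

theorem exists_mem_degree_eq_leadingCoeff_eq {I : Ideal (MvPolynomial σ K)}
    {q : MvPolynomial σ K} (hqI : q ∈ I) (hq : q ≠ 0) {d : σ →₀ ℕ} (hd : m.degree q ≤ d)
    {c : K} (hc : c ≠ 0) : ∃ p ∈ I, m.degree p = d ∧ m.leadingCoeff p = c := by
  have hlc : m.leadingCoeff q ≠ 0 := m.leadingCoeff_ne_zero_iff.mpr hq
  have hcoeff : c / m.leadingCoeff q ≠ 0 := div_ne_zero hc hlc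
  refine ⟨monomial (d - m.degree q) (c / m.leadingCoeff q) * q,
    I.mul_mem_left _ hqI, ?_, ?_⟩
  · classical
    rw [m.degree_mul ((monomial_eq_zero).not.mpr hcoeff) hq, m.degree_monomial, if_neg hcoeff,
      tsub_add_cancel_of_le hd]
  · rw [m.leadingCoeff_mul, m.leadingCoeff_monomial, div_mul_cancel₀ c hlc]

theorem degree_sub_lt_of_leadingCoeff_eq {f g : MvPolynomial σ K} (hfg : f ≠ g)
    (hdeg : m.degree f = m.degree g) (hlc : m.leadingCoeff f = m.leadingCoeff g) :
    m.degree (f - g) ≺[m] m.degree f := by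
  have hle : m.degree (f - g) ≼[m] m.degree f :=
    m.degree_sub_le.trans (by rw [hdeg, sup_idem])
  refine hle.lt_of_ne fun heq => sub_ne_zero.mpr hfg ?_
  rw [← m.coeff_degree_eq_zero_iff, m.toSyn.injective heq, coeff_sub]
  exact sub_eq_zero.mpr (by simpa only [leadingCoeff, hdeg] using hlc)

def degreeLE (I : Ideal (MvPolynomial σ K)) (s : m.syn) : Submodule K (MvPolynomial σ K) where
  carrier := {p | p ∈ I ∧ m.toSyn (m.degree p) ≤ s}
  add_mem' ha hb := ⟨add_mem ha.1 hb.1, m.degree_add_le.trans (sup_le ha.2 hb.2)⟩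
  zero_mem' := ⟨zero_mem I, by simp⟩
  smul_mem' c _ hp := ⟨I.smul_of_tower_mem c hp.1, m.degree_smul_le.trans hp.2⟩

theorem degreeLE_mono {I : Ideal (MvPolynomial σ K)} {s t : m.syn} (h : s ≤ t) :
    m.degreeLE I s ≤ m.degreeLE I t :=
  fun _ hp => ⟨hp.1, hp.2.trans h⟩

end MonomialOrder

section InitialIdeal

variable (m : MonomialOrder (Fin n))

theorem lm_eq_degree (f : MvPolynomial (Fin n) K) : lm m f = m.degree f := rfl

theorem initialIdeal_eq_span_monomial (I : Ideal (MvPolynomial (Fin n) K)) :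
    initialIdeal m I = Ideal.span ((fun d => monomial d (1 : K)) ''
      {d | ∃ f ∈ I, f ≠ 0 ∧ m.degree f = d}) := by
  rw [initialIdeal, Set.image]
  congr 1
  ext p
  simp only [lm_eq_degree]
  grind

theorem mem_initialIdeal_iff {I : Ideal (MvPolynomial (Fin n) K)} {p : MvPolynomial (Fin n) K} :
    p ∈ initialIdeal m I ↔ ∀ d ∈ p.support, ∃ f ∈ I, f ≠ 0 ∧ m.degree f ≤ d := by
  rw [initialIdeal_eq_span_monomial, mem_ideal_span_monomial_image]
  grind

theorem initialIdeal_mono {I I' : Ideal (MvPolynomial (Fin n) K)} (h : I ≤ I') :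
    initialIdeal m I ≤ initialIdeal m I' := by
  intro p hp
  rw [mem_initialIdeal_iff] at hp ⊢
  intro d hd
  obtain ⟨f, hf, hf0, hle⟩ := hp d hd
  exact ⟨f, h hf, hf0, hle⟩

theorem exists_of_monomial_mem_initialIdeal_sup {J E : Ideal (MvPolynomial (Fin n) K)}
    {d : Fin n →₀ ℕ} (hd : monomial d (1 : K) ∈ initialIdeal m J ⊔ initialIdeal m E) :
    (∃ f ∈ J, f ≠ 0 ∧ m.degree f ≤ d) ∨ (∃ g ∈ E, g ≠ 0 ∧ m.degree g ≤ d) := by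
  rw [initialIdeal_eq_span_monomial, initialIdeal_eq_span_monomial, ← Ideal.span_union,
    ← Set.image_union, mem_ideal_span_monomial_image] at hd
  obtain ⟨e, he, hle⟩ := hd d (by simp)
  rcases he with ⟨f, hf, hf0, rfl⟩ | ⟨g, hg, hg0, rfl⟩
  · exact .inl ⟨f, hf, hf0, hle⟩
  · exact .inr ⟨g, hg, hg0, hle⟩

end InitialIdeal

section Intersection

variable (m : MonomialOrder (Fin n)) {J E : Ideal (MvPolynomial (Fin n) K)}

/-- Standard representations: every `p ∈ J ⊔ E` is `a + b` with `a ∈ J`, `b ∈ E` and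
`deg a, deg b ≼ deg p`. -/
theorem mem_degreeLE_sup_degreeLE_of_initialIdeal_sup
    (h : initialIdeal m (J ⊔ E) = initialIdeal m J ⊔ initialIdeal m E)
    {p : MvPolynomial (Fin n) K} (hp : p ∈ J ⊔ E) :
    p ∈ m.degreeLE J (m.toSyn (m.degree p)) ⊔ m.degreeLE E (m.toSyn (m.degree p)) := by
  induction hs : m.toSyn (m.degree p) using WellFoundedLT.induction generalizing p with
  | ind s ih =>
  subst hs
  by_cases hp0 : p = 0
  · exact hp0 ▸ zero_mem _
  have hlc : m.leadingCoeff p ≠ 0 := m.leadingCoeff_ne_zero_iff.mpr hp0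
  have hmem : monomial (m.degree p) (1 : K) ∈ initialIdeal m J ⊔ initialIdeal m E :=
    h ▸ Ideal.subset_span ⟨p, hp, hp0, rfl⟩
  -- Cancel the leading term of `p` by an element `q` of `J` or of `E`, then recurse on `p - q`.
  obtain ⟨q, hqJE, hqdeg, hqlc⟩ : ∃ q, (q ∈ J ∨ q ∈ E) ∧ m.degree q = m.degree p ∧
      m.leadingCoeff q = m.leadingCoeff p := by
    rcases exists_of_monomial_mem_initialIdeal_sup m hmem with
      ⟨f, hfJ, hf0, hle⟩ | ⟨g, hgE, hg0, hle⟩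
    · obtain ⟨q, hqJ, hq⟩ := m.exists_mem_degree_eq_leadingCoeff_eq hfJ hf0 hle hlc
      exact ⟨q, .inl hqJ, hq⟩
    · obtain ⟨q, hqE, hq⟩ := m.exists_mem_degree_eq_leadingCoeff_eq hgE hg0 hle hlc
      exact ⟨q, .inr hqE, hq⟩
  have hq : q ∈ m.degreeLE J (m.toSyn (m.degree p)) ⊔ m.degreeLE E (m.toSyn (m.degree p)) :=
    hqJE.elim (fun hqJ => Submodule.mem_sup_left ⟨hqJ, hqdeg ▸ le_rfl⟩)
      (fun hqE => Submodule.mem_sup_right ⟨hqE, hqdeg ▸ le_rfl⟩)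
  by_cases hpq : p = q
  · exact hpq ▸ hq
  have hlt := m.degree_sub_lt_of_leadingCoeff_eq hpq hqdeg.symm hqlc.symm
  have hrest := ih _ hlt (sub_mem hp (hqJE.elim Ideal.mem_sup_left Ideal.mem_sup_right)) rfl
  have hmono := sup_le_sup (m.degreeLE_mono (I := J) hlt.le)
    (m.degreeLE_mono (I := E) hlt.le)
  simpa only [sub_add_cancel] using add_mem (hmono hrest) hq

theorem exists_mem_inf_degree_eq_of_initialIdeal_sup
    (h : initialIdeal m (J ⊔ E) = initialIdeal m J ⊔ initialIdeal m E)
    {f g : MvPolynomial (Fin n) K} (hfJ : f ∈ J) (hf0 : f ≠ 0) (hgE : g ∈ E) (hg0 : g ≠ 0)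
    {d : Fin n →₀ ℕ} (hfd : m.degree f ≤ d) (hgd : m.degree g ≤ d) :
    ∃ p ∈ J ⊓ E, p ≠ 0 ∧ m.degree p = d := by
  obtain ⟨f₁, hf₁J, hf₁deg, hf₁lc⟩ :=
    m.exists_mem_degree_eq_leadingCoeff_eq hfJ hf0 hfd one_ne_zero
  obtain ⟨g₁, hg₁E, hg₁deg, hg₁lc⟩ :=
    m.exists_mem_degree_eq_leadingCoeff_eq hgE hg0 hgd one_ne_zero
  have hf₁0 : f₁ ≠ 0 := m.leadingCoeff_ne_zero_iff.mp (hf₁lc ▸ one_ne_zero)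
  by_cases hfg : f₁ = g₁
  · exact ⟨f₁, ⟨hf₁J, hfg ▸ hg₁E⟩, hf₁0, hf₁deg⟩
  have hlt := m.degree_sub_lt_of_leadingCoeff_eq hfg (hf₁deg.trans hg₁deg.symm)
    (hf₁lc.trans hg₁lc.symm)
  obtain ⟨a, ha, b, hb, hab⟩ := Submodule.mem_sup.mp <|
    mem_degreeLE_sup_degreeLE_of_initialIdeal_sup m h
      (sub_mem (Ideal.mem_sup_left hf₁J) (Ideal.mem_sup_right hg₁E))
  have hfa : f₁ - a = g₁ + b := by linear_combination -hab
  have hadeg : m.degree a ≺[m] m.degree f₁ := ha.2.trans_lt hlt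
  refine ⟨f₁ - a, ⟨sub_mem hf₁J ha.1, hfa ▸ add_mem hg₁E hb.1⟩, ?_,
    (m.degree_sub_of_lt hadeg).trans hf₁deg⟩
  rw [← m.leadingCoeff_ne_zero_iff, m.leadingCoeff_sub_of_lt hadeg, hf₁lc]
  exact one_ne_zero

end Intersection

/-- If `in(J+E) = in(J) + in(E)`, then `in(J ∩ E) = in(J) ∩ in(E)`. -/
theorem stmt2 (m : MonomialOrder (Fin n)) (J E : Ideal (MvPolynomial (Fin n) K))
    (h : initialIdeal m (J + E) = initialIdeal m J + initialIdeal m E) :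
    initialIdeal m (J ⊓ E) = initialIdeal m J ⊓ initialIdeal m E := by
  simp only [Submodule.add_eq_sup] at h
  refine le_antisymm (le_inf (initialIdeal_mono m inf_le_left) (initialIdeal_mono m inf_le_right))
    fun p hp => (mem_initialIdeal_iff m).mpr fun d hd => ?_
  obtain ⟨f, hfJ, hf0, hfd⟩ := (mem_initialIdeal_iff m).mp hp.1 d hd
  obtain ⟨g, hgE, hg0, hgd⟩ := (mem_initialIdeal_iff m).mp hp.2 d hd
  obtain ⟨q, hq, hq0, hqd⟩ :=
    exists_mem_inf_degree_eq_of_initialIdeal_sup m h hfJ hf0 hgE hg0 hfd hgd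
  exact ⟨q, hq, hq0, hqd.le⟩
end

section
/- Let J be an ideal of S = K[x_1,...,x_n] with a fixed monomial order, and let f ∈ S be a nonzero polynomial that is a nonzerodivisor on S/J. Then in(J ∩ (f)) = in(f) · in(J). -/
open MvPolynomial

variable {K : Type*} [Field K] {n : ℕ}

/-!
Regularity of `f` on `S/J` gives `J ∩ (f) = f·J`. Over a domain leading monomials are
multiplicative, so the leading monomials of the nonzero elements `f·h` of `f·J` are exactly
`in(f)` times those of the nonzero `h ∈ J`.
-/

theorem Ideal.inf_span_singleton_eq_span_singleton_mul {R : Type*} [CommRing R] {J : Ideal R}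
    {f : R} (hreg : IsSMulRegular (R ⧸ J) f) : J ⊓ Ideal.span {f} = Ideal.span {f} * J := by
  refine le_antisymm ?_ (inf_comm J _ ▸ Ideal.mul_le_inf)
  rintro x ⟨hxJ, hxf⟩
  obtain ⟨c, rfl⟩ := Ideal.mem_span_singleton'.mp hxf
  have hcJ : Ideal.Quotient.mk J c = 0 := hreg <|
    show Ideal.Quotient.mk J (f * c) = f • 0 by
      rw [smul_zero, Ideal.Quotient.eq_zero_iff_mem, mul_comm]
      exact hxJ
  exact Ideal.mem_span_singleton_mul.mpr ⟨c, Ideal.Quotient.eq_zero_iff_mem.mp hcJ, mul_comm f c⟩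

lemma monomial_lm_mul (m : MonomialOrder (Fin n)) {f g : MvPolynomial (Fin n) K}
    (hf : f ≠ 0) (hg : g ≠ 0) :
    monomial (lm m (f * g)) (1 : K) = monomial (lm m f) 1 * monomial (lm m g) 1 := by
  rw [monomial_mul, one_mul]
  -- `lm` is definitionally `MonomialOrder.degree`
  exact congrArg (monomial · 1) (m.degree_mul hf hg)

lemma initialIdeal_span_singleton_mul (m : MonomialOrder (Fin n))
    (J : Ideal (MvPolynomial (Fin n) K)) {f : MvPolynomial (Fin n) K} (hf : f ≠ 0) :
    initialIdeal m (Ideal.span {f} * J) =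
      Ideal.span {monomial (lm m f) (1 : K)} * initialIdeal m J := by
  rw [initialIdeal, initialIdeal, Ideal.span_mul_span', Set.singleton_mul]
  congr 1
  ext p
  constructor
  · rintro ⟨g, hg, hg0, rfl⟩
    obtain ⟨h, hhJ, rfl⟩ := Ideal.mem_span_singleton_mul.mp hg
    have hh0 : h ≠ 0 := right_ne_zero_of_mul hg0
    exact ⟨_, ⟨h, hhJ, hh0, rfl⟩, (monomial_lm_mul m hf hh0).symm⟩
  · rintro ⟨_, ⟨h, hhJ, hh0, rfl⟩, rfl⟩
    exact ⟨f * h, Ideal.mul_mem_mul (Ideal.mem_span_singleton_self f) hhJ, mul_ne_zero hf hh0,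
      (monomial_lm_mul m hf hh0).symm⟩

/-- For `f` a nonzero polynomial, regular on `S/J`: `in(J ∩ (f)) = (in(f)) · in(J)`. -/
theorem stmt8 (m : MonomialOrder (Fin n)) (J : Ideal (MvPolynomial (Fin n) K))
    (f : MvPolynomial (Fin n) K) (hf : f ≠ 0)
    (hreg : IsSMulRegular (MvPolynomial (Fin n) K ⧸ J) f) :
    initialIdeal m (J ⊓ Ideal.span {f}) =
      Ideal.span {(monomial (lm m f) (1 : K))} * initialIdeal m J := by
  rw [Ideal.inf_span_singleton_eq_span_singleton_mul hreg, initialIdeal_span_singleton_mul m J hf]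
end

section
/- Let J, E, E' be ideals of S = K[x_1,...,x_n] with a fixed monomial order such that (J,E) and (J,E') are Gröbner-nice pairs. If in(J∩E + J∩E') = in(J) ∩ in(E + E'), then J∩E + J∩E' = J ∩ (E + E') and (J, E+E') is a Gröbner-nice pair. -/
/-! Since `J ∩ E + J ∩ E' ⊆ J ∩ (E + E')`, the hypothesis squeezes `in(J ∩ (E + E'))` between
`in(J ∩ E + J ∩ E')` and `in(J) ∩ in(E + E')`. Two nested ideals with the same initial ideal
coincide, because any element of the larger one can be reduced by elements of the smaller one
with the same leading term. And `in(J ∩ F) = in(J) ∩ in(F)` forces `in(J + F) = in(J) + in(F)`: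
when the leading terms of `a ∈ J` and `b ∈ F` cancel in `a + b`, an element of `J ∩ F` with that
leading term lowers the degrees of both summands. -/

open MvPolynomial

variable {K : Type*} [Field K] {n : ℕ}

open scoped MonomialOrder

namespace MonomialOrder

variable {σ R : Type*} {m : MonomialOrder σ}

theorem degree_add_eq_or_cancel [CommSemiring R] (f g : MvPolynomial σ R) :
    m.degree (f + g) = m.degree f ∨ m.degree (f + g) = m.degree g ∨
      (m.degree f = m.degree g ∧ m.degree (f + g) ≺[m] m.degree f) := by
  by_cases hfg : m.degree f = m.degree g
  · rcases (m.degree_add_le (f := f) (g := g)).lt_or_eq with hlt | heq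
    · exact .inr <| .inr ⟨hfg, by simpa [hfg] using hlt⟩
    · exact .inl <| m.toSyn.injective <| by simpa [hfg] using heq
  · rcases max_choice (m.toSyn (m.degree f)) (m.toSyn (m.degree g)) with h | h <;>
      [left; (right; left)] <;>
      exact m.toSyn.injective <| (m.degree_add_of_ne hfg).trans h

theorem degree_sub_lt_of_leadingTerm_eq [CommRing R] {f g : MvPolynomial σ R}
    (h : m.leadingTerm f = m.leadingTerm g) (hfg : f ≠ g) :
    m.degree (f - g) ≺[m] m.degree f := by
  obtain ⟨hcoeff, hdeg⟩ := m.leadingTerm_eq_leadingTerm_iff.mp h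
  refine lt_of_le_of_ne (by simpa [hdeg] using m.degree_sub_le (f := f) (g := g)) fun heq => ?_
  have hne : (f - g).coeff (m.degree (f - g)) ≠ 0 :=
    m.coeff_degree_ne_zero_iff.mpr (sub_ne_zero.mpr hfg)
  rw [m.toSyn.injective heq, coeff_sub] at hne
  rw [leadingCoeff, leadingCoeff, ← hdeg] at hcoeff
  exact hne (sub_eq_zero.mpr hcoeff)

end MonomialOrder

section InitialIdeal

variable (m : MonomialOrder (Fin n))

variable {m}

theorem monomial_degree_mem_initialIdeal {I : Ideal (MvPolynomial (Fin n) K)}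
    {f : MvPolynomial (Fin n) K} (hf : f ∈ I) (hf0 : f ≠ 0) :
    monomial (m.degree f) (1 : K) ∈ initialIdeal m I :=
  -- `lm m f` unfolds to `m.degree f`
  Ideal.subset_span ⟨f, hf, hf0, rfl⟩

theorem exists_degree_le_of_monomial_mem_initialIdeal {I : Ideal (MvPolynomial (Fin n) K)}
    {d : Fin n →₀ ℕ} (hd : monomial d (1 : K) ∈ initialIdeal m I) :
    ∃ g ∈ I, g ≠ 0 ∧ m.degree g ≤ d := by
  have hspan : initialIdeal m I = Ideal.span ((fun e => monomial e (1 : K)) ''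
      {e | ∃ f ∈ I, f ≠ 0 ∧ m.degree f = e}) := by
    unfold initialIdeal
    congr 1
    ext p
    exact ⟨fun ⟨f, hf, hf0, hp⟩ => ⟨_, ⟨f, hf, hf0, rfl⟩, hp.symm⟩,
      fun ⟨_, ⟨f, hf, hf0, rfl⟩, hp⟩ => ⟨f, hf, hf0, hp.symm⟩⟩
  rw [hspan, mem_ideal_span_monomial_image] at hd
  obtain ⟨_, ⟨g, hg, hg0, rfl⟩, hle⟩ := hd d (by simp)
  exact ⟨g, hg, hg0, hle⟩

theorem exists_mem_leadingTerm_eq_of_monomial_mem_initialIdeal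
    {I : Ideal (MvPolynomial (Fin n) K)} {f : MvPolynomial (Fin n) K}
    (hf : monomial (m.degree f) (1 : K) ∈ initialIdeal m I) :
    ∃ t ∈ I, m.leadingTerm t = m.leadingTerm f := by
  obtain ⟨g, hg, hg0, hle⟩ := exists_degree_le_of_monomial_mem_initialIdeal hf
  refine ⟨monomial (m.degree f - m.degree g) (m.leadingCoeff f / m.leadingCoeff g) * g,
    I.mul_mem_left _ hg, ?_⟩
  rw [m.leadingTerm_mul, m.leadingTerm_monomial, MonomialOrder.leadingTerm,
    MonomialOrder.leadingTerm, monomial_mul, tsub_add_cancel_of_le hle,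
    div_mul_cancel₀ _ (m.leadingCoeff_ne_zero_iff.mpr hg0)]

theorem eq_of_le_of_initialIdeal_le {A B : Ideal (MvPolynomial (Fin n) K)} (hAB : A ≤ B)
    (h : initialIdeal m B ≤ initialIdeal m A) : A = B := by
  refine le_antisymm hAB fun f hf => ?_
  suffices ∀ μ : m.syn, ∀ f ∈ B, m.toSyn (m.degree f) = μ → f ∈ A from this _ f hf rfl
  intro μ
  induction μ using WellFoundedLT.induction with
  | ind μ ih =>
    rintro f hf rfl
    by_cases hf0 : f = 0
    · rw [hf0]; exact A.zero_mem
    obtain ⟨t, ht, hlt⟩ := exists_mem_leadingTerm_eq_of_monomial_mem_initialIdeal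
      (h (monomial_degree_mem_initialIdeal hf hf0))
    by_cases hft : f = t
    · rwa [hft]
    have hsub : f - t ∈ A := ih _ (m.degree_sub_lt_of_leadingTerm_eq hlt.symm hft) _
      (B.sub_mem hf (hAB ht)) rfl
    simpa using A.add_mem hsub ht

theorem monomial_degree_add_mem_sup {J F : Ideal (MvPolynomial (Fin n) K)}
    (h : initialIdeal m J ⊓ initialIdeal m F ≤ initialIdeal m (J ⊓ F))
    {a b : MvPolynomial (Fin n) K} (ha : a ∈ J) (hb : b ∈ F) (hab : a + b ≠ 0) :
    monomial (m.degree (a + b)) (1 : K) ∈ initialIdeal m J ⊔ initialIdeal m F := by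
  suffices ∀ μ : m.syn, ∀ a ∈ J, ∀ b ∈ F,
      m.toSyn (m.degree a) ⊔ m.toSyn (m.degree b) = μ → a + b ≠ 0 →
      monomial (m.degree (a + b)) (1 : K) ∈ initialIdeal m J ⊔ initialIdeal m F from
    this _ a ha b hb rfl hab
  intro μ
  induction μ using WellFoundedLT.induction with
  | ind μ ih =>
    rintro a ha b hb rfl hab
    by_cases ha0 : a = 0
    · rw [ha0, zero_add] at hab ⊢
      exact Submodule.mem_sup_right (monomial_degree_mem_initialIdeal hb hab)
    by_cases hb0 : b = 0
    · rw [hb0, add_zero] at hab ⊢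
      exact Submodule.mem_sup_left (monomial_degree_mem_initialIdeal ha hab)
    rcases m.degree_add_eq_or_cancel a b with hda | hdb | ⟨hdeg, hlt⟩
    · exact hda ▸ Submodule.mem_sup_left (monomial_degree_mem_initialIdeal ha ha0)
    · exact hdb ▸ Submodule.mem_sup_right (monomial_degree_mem_initialIdeal hb hb0)
    obtain ⟨t, ht, hLT⟩ := exists_mem_leadingTerm_eq_of_monomial_mem_initialIdeal
      (h ⟨monomial_degree_mem_initialIdeal ha ha0,
        hdeg ▸ monomial_degree_mem_initialIdeal hb hb0⟩)
    have ha' : m.degree (a - t) ≺[m] m.degree a := by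
      by_cases hat : a = t
      · simpa [hat] using (m.zero_le _).trans_lt hlt
      · exact m.degree_sub_lt_of_leadingTerm_eq hLT.symm hat
    have hb' : m.degree (b + t) ≺[m] m.degree a := by
      rw [show b + t = (a + b) - (a - t) by ring]
      exact m.degree_sub_le.trans_lt (max_lt hlt ha')
    have hsum : a - t + (b + t) = a + b := by ring
    have := ih _ (lt_sup_of_lt_left (max_lt ha' hb')) (a - t) (J.sub_mem ha ht.1) (b + t)
      (F.add_mem hb ht.2) rfl (hsum ▸ hab)
    rwa [hsum] at this

theorem initialIdeal_sup_le_of_inf_le {J F : Ideal (MvPolynomial (Fin n) K)}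
    (h : initialIdeal m J ⊓ initialIdeal m F ≤ initialIdeal m (J ⊓ F)) :
    initialIdeal m (J ⊔ F) ≤ initialIdeal m J ⊔ initialIdeal m F := by
  rw [initialIdeal, Ideal.span_le]
  rintro _ ⟨f, hf, hf0, rfl⟩
  obtain ⟨a, ha, b, hb, rfl⟩ := Submodule.mem_sup.mp hf
  exact monomial_degree_add_mem_sup h ha hb hf0

end InitialIdeal

theorem stmt11_general (m : MonomialOrder (Fin n)) (J E E' : Ideal (MvPolynomial (Fin n) K))
    (h : initialIdeal m (J ⊓ E + J ⊓ E') =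
      initialIdeal m J ⊓ initialIdeal m (E + E')) :
    J ⊓ E + J ⊓ E' = J ⊓ (E + E') ∧
      initialIdeal m (J + (E + E')) = initialIdeal m J + initialIdeal m (E + E') := by
  simp only [Submodule.add_eq_sup] at h ⊢
  have hle : J ⊓ E ⊔ J ⊓ E' ≤ J ⊓ (E ⊔ E') :=
    le_inf (sup_le inf_le_left inf_le_left) (sup_le_sup inf_le_right inf_le_right)
  have hinf :
      initialIdeal m J ⊓ initialIdeal m (E ⊔ E') ≤ initialIdeal m (J ⊓ (E ⊔ E')) :=
    h ▸ initialIdeal_mono m hle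
  have hge : initialIdeal m (J ⊓ (E ⊔ E')) ≤ initialIdeal m (J ⊓ E ⊔ J ⊓ E') :=
    h ▸ le_inf (initialIdeal_mono m inf_le_left) (initialIdeal_mono m inf_le_right)
  exact ⟨eq_of_le_of_initialIdeal_le hle hge, le_antisymm (initialIdeal_sup_le_of_inf_le hinf)
    (sup_le (initialIdeal_mono m le_sup_left) (initialIdeal_mono m le_sup_right))⟩

/-- If `(J,E)` and `(J,E')` are Gröbner-nice pairs and
`in(J∩E + J∩E') = in(J) ∩ in(E + E')`, then `J∩E + J∩E' = J ∩ (E + E')` and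
`(J, E+E')` is a Gröbner-nice pair. -/
theorem stmt11 (m : MonomialOrder (Fin n)) (J E E' : Ideal (MvPolynomial (Fin n) K))
    (hE : initialIdeal m (J + E) = initialIdeal m J + initialIdeal m E)
    (hE' : initialIdeal m (J + E') = initialIdeal m J + initialIdeal m E')
    (h : initialIdeal m (J ⊓ E + J ⊓ E') =
      initialIdeal m J ⊓ initialIdeal m (E + E')) :
    J ⊓ E + J ⊓ E' = J ⊓ (E + E') ∧
      initialIdeal m (J + (E + E')) = initialIdeal m J + initialIdeal m (E + E') :=
  stmt11_general m J E E' h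
end

section
/- Let J be an ideal of S = K[x_1,...,x_n] with a fixed monomial order, G_J a Gröbner basis of J, and E an ideal of S. If there exists a Gröbner basis G_E of E such that S(f,g) ∈ E for all f ∈ G_J and g ∈ G_E, then S(f,g) ∈ E for all f ∈ G_J and all g ∈ E. -/
open MvPolynomial

variable {K : Type*} [Field K] {n : ℕ}

/-- If there is a Gröbner basis `G_E` of `E` with `S(f,g) ∈ E` for all `f ∈ G_J`,
`g ∈ G_E`, then `S(f,g) ∈ E` for all `f ∈ G_J` and all nonzero `g ∈ E`. -/
theorem stmt16 (m : MonomialOrder (Fin n)) (J E : Ideal (MvPolynomial (Fin n) K))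
    (GJ : Set (MvPolynomial (Fin n) K)) (hGJ : IsGroebnerBasis m J GJ)
    (h : ∃ GE : Set (MvPolynomial (Fin n) K), IsGroebnerBasis m E GE ∧
      ∀ f ∈ GJ, ∀ g ∈ GE, sPoly m f g ∈ E) :
    ∀ f ∈ GJ, ∀ g ∈ E, g ≠ 0 → sPoly m f g ∈ E := by
  obtain ⟨GE, hGE, hS⟩ := h
  intro f hf g hgE hg0
  -- find g' ∈ GE with lm g' ≤ lm g
  have hmem : (monomial (lm m g) (1 : K)) ∈ initialIdeal m E :=
    Ideal.subset_span ⟨g, hgE, hg0, rfl⟩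
  rw [← hGE.2.2.2] at hmem
  rw [show ((fun g => monomial (lm m g) (1 : K)) '' GE) =
      (fun μ => monomial μ (1 : K)) '' (lm m '' GE) by rw [Set.image_image]] at hmem
  have hdvd := mem_ideal_span_monomial_image.mp hmem (lm m g) (by
    simp [support_monomial])
  obtain ⟨s, hs, hle⟩ := hdvd
  obtain ⟨g', hg', rfl⟩ := hs
  -- g' ∈ E
  have hg'E : g' ∈ E := hGE.2.2.1 ▸ Ideal.subset_span hg'
  -- from hypothesis: first term with g' is in E
  have h1' : monomial (lm m f ⊔ lm m g' - lm m f) (f.coeff (lm m f))⁻¹ * f ∈ E := by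
    have := hS f hf g' hg'
    have h2' : monomial (lm m f ⊔ lm m g' - lm m g') (g'.coeff (lm m g'))⁻¹ * g' ∈ E :=
      Ideal.mul_mem_left _ _ hg'E
    have := E.add_mem this h2'
    simpa [sPoly, sub_add_cancel] using this
  -- pointwise inequality
  have hle2 : lm m f ⊔ lm m g' - lm m f ≤ lm m f ⊔ lm m g - lm m f := by
    intro i
    simp only [Finsupp.tsub_apply, Finsupp.sup_apply]
    exact tsub_le_tsub_right (sup_le_sup_left (hle i) _) _
  have key : monomial (lm m f ⊔ lm m g - lm m f) (f.coeff (lm m f))⁻¹ * f ∈ E := by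
    have : monomial ((lm m f ⊔ lm m g - lm m f) - (lm m f ⊔ lm m g' - lm m f)) (1 : K) *
        (monomial (lm m f ⊔ lm m g' - lm m f) (f.coeff (lm m f))⁻¹ * f) ∈ E :=
      Ideal.mul_mem_left _ _ h1'
    rwa [← mul_assoc, monomial_mul, one_mul, tsub_add_cancel_of_le hle2] at this
  have h2 : monomial (lm m f ⊔ lm m g - lm m g) (g.coeff (lm m g))⁻¹ * g ∈ E :=
    Ideal.mul_mem_left _ _ hgE
  exact E.sub_mem key h2
end
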